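/- A unit-speed curve α with positive curvature is a geodesic on some general cone with vertex at the origin if and only if α is a rectifying curve. -/

import Mathlib

/-!
If `α` is rectifying, differentiating `⟪α, N⟫ = 0` along the Frenet equations shows that
`⟪α, T⟫ = s + c` and that `⟪α, B⟫ = μ` is constant, with `μ ≠ 0` since `κ > 0`; hence
`α = (s + c) T + μ B`. The cone over the spherical curve `α / ‖α‖` contains `α`, and after
reparametrizing that curve by arc length its velocity is `±(μ T - (s + c) B) / ‖α‖`, so the
cone normal `y' × y` is `±T × B = ∓N`. Conversely the cone normal `y' × y` is orthogonal to `y`,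
hence to `α = u y`.
-/

open Real Set
open scoped RealInnerProductSpace

noncomputable section

/-- Euclidean 3-space. -/
abbrev E3 := EuclideanSpace ℝ (Fin 3)

/-- Constructor for points of `E3`. -/
def e3 (x y z : ℝ) : E3 := (WithLp.equiv 2 (Fin 3 → ℝ)).symm ![x, y, z]

/-- The cross product on `E3`. -/
def cross3 (a b : E3) : E3 :=
  e3 (a 1 * b 2 - a 2 * b 1) (a 2 * b 0 - a 0 * b 2) (a 0 * b 1 - a 1 * b 0)

open Filter Topology

lemma inner_E3 (x y : E3) : ⟪x, y⟫ = x 0 * y 0 + x 1 * y 1 + x 2 * y 2 := by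
  simp [PiLp.inner_apply, Fin.sum_univ_three, mul_comm]

lemma inner_cross3_self_left (u v : E3) : ⟪u, cross3 u v⟫ = 0 := by
  simp [inner_E3, cross3, e3]; ring

lemma inner_cross3_self_right (u v : E3) : ⟪v, cross3 u v⟫ = 0 := by
  simp [inner_E3, cross3, e3]; ring

lemma norm_cross3_sq (u v : E3) : ‖cross3 u v‖ ^ 2 = ‖u‖ ^ 2 * ‖v‖ ^ 2 - ⟪u, v⟫ ^ 2 := by
  simp only [← real_inner_self_eq_norm_sq, inner_E3]; simp [cross3, e3]; ring

lemma cross3_cross3_self_left (u v : E3) : cross3 u (cross3 u v) = ⟪u, v⟫ • u - ⟪u, u⟫ • v := by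
  ext i; fin_cases i <;> simp only [inner_E3] <;> simp [cross3, e3] <;> ring

lemma cross3_smul_add_smul (u v : E3) (a b c d : ℝ) :
    cross3 (a • u + b • v) (c • u + d • v) = (a * d - b * c) • cross3 u v := by
  ext i; fin_cases i <;> simp [cross3, e3] <;> ring

lemma norm_cross3_eq_one {u v : E3} (hu : ‖u‖ = 1) (hv : ‖v‖ = 1) (huv : ⟪u, v⟫ = 0) :
    ‖cross3 u v‖ = 1 := by
  rw [← sq_eq_sq₀ (norm_nonneg _) zero_le_one, norm_cross3_sq, hu, hv, huv]; norm_num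

lemma orthonormal_cross3 {u v : E3} (hu : ‖u‖ = 1) (hv : ‖v‖ = 1) (huv : ⟪u, v⟫ = 0) :
    Orthonormal ℝ ![u, v, cross3 u v] := by
  have hw := norm_cross3_eq_one hu hv huv
  rw [orthonormal_iff_ite]
  intro i j
  fin_cases i <;> fin_cases j <;>
    simp [hu, hv, hw, huv, real_inner_comm u v, inner_cross3_self_left, inner_cross3_self_right,
      real_inner_comm _ (cross3 u v)]

lemma eq_sum_inner_smul_cross3 {u v : E3} (hu : ‖u‖ = 1) (hv : ‖v‖ = 1) (huv : ⟪u, v⟫ = 0)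
    (w : E3) : w = ⟪u, w⟫ • u + ⟪v, w⟫ • v + ⟪cross3 u v, w⟫ • cross3 u v := by
  have hon := orthonormal_cross3 hu hv huv
  have hsp : ⊤ ≤ Submodule.span ℝ (Set.range ![u, v, cross3 u v]) :=
    (hon.linearIndependent.span_eq_top_of_card_eq_finrank (by simp)).ge
  simpa [Fin.sum_univ_three] using ((OrthonormalBasis.mk hon hsp).sum_repr' w).symm

section InnerProductSpace

variable {F : Type*} [NormedAddCommGroup F] [InnerProductSpace ℝ F]

lemma inner_add_inner_eq_zero_of_eventually_eq {f g : ℝ → F} {f' g' : F} {s c : ℝ}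
    (hf : HasDerivAt f f' s) (hg : HasDerivAt g g' s) (h : ∀ᶠ x in 𝓝 s, ⟪f x, g x⟫ = c) :
    ⟪f s, g'⟫ + ⟪f', g s⟫ = 0 :=
  (hf.inner ℝ hg).unique ((hasDerivAt_const s c).congr_of_eventuallyEq h)

lemma HasDerivAt.norm {f : ℝ → F} {f' : F} {s : ℝ} (hf : HasDerivAt f f' s) (h0 : f s ≠ 0) :
    HasDerivAt (fun x => ‖f x‖) (⟪f s, f'⟫ / ‖f s‖) s := by
  have h := hf.norm_sq.sqrt (by positivity)
  simp only [Real.sqrt_sq (norm_nonneg _)] at h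
  convert h using 1
  field_simp

lemma HasDerivAt.norm_inv_smul {f : ℝ → F} {f' : F} {s : ℝ} (hf : HasDerivAt f f' s)
    (h0 : f s ≠ 0) :
    HasDerivAt (fun x => ‖f x‖⁻¹ • f x) (‖f s‖⁻¹ • f' - (⟪f s, f'⟫ / ‖f s‖ ^ 3) • f s) s := by
  have hr : ‖f s‖ ≠ 0 := norm_ne_zero_iff.mpr h0
  refine (((hf.norm h0).inv hr).smul hf).congr_deriv ?_
  rw [sub_eq_add_neg, ← neg_smul]
  congr 2
  field_simp

lemma norm_smul_add_smul_sq {u v : F} (hu : ‖u‖ = 1) (hv : ‖v‖ = 1) (huv : ⟪u, v⟫ = 0)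
    (a b : ℝ) : ‖a • u + b • v‖ ^ 2 = a ^ 2 + b ^ 2 := by
  rw [norm_add_sq_real, norm_smul, norm_smul, real_inner_smul_left, real_inner_smul_right, huv,
    hu, hv]
  simp

lemma smul_add_smul_ne_zero {u v : F} (hu : ‖u‖ = 1) (hv : ‖v‖ = 1) (huv : ⟪u, v⟫ = 0)
    {a b : ℝ} (hb : b ≠ 0) : a • u + b • v ≠ 0 := by
  intro h
  have h2 := norm_smul_add_smul_sq hu hv huv a b
  rw [h, norm_zero] at h2
  nlinarith [sq_nonneg a, sq_pos_of_ne_zero hb]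

lemma inner_deriv_eq_zero_of_eventually_norm_eq {f : ℝ → F} {f' : F} {s r : ℝ}
    (hf : HasDerivAt f f' s) (h : ∀ᶠ x in 𝓝 s, ‖f x‖ = r) : ⟪f s, f'⟫ = 0 := by
  have h2 : ∀ᶠ x in 𝓝 s, ⟪f x, f x⟫ = r ^ 2 := by
    filter_upwards [h] with x hx using by rw [real_inner_self_eq_norm_sq, hx]
  have := inner_add_inner_eq_zero_of_eventually_eq hf hf h2
  rw [real_inner_comm (f s) f'] at this
  linarith

end InnerProductSpace

lemma hasDerivAt_tan_arctan (z : ℝ) : HasDerivAt tan (1 + z ^ 2) (arctan z) := by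
  have h := hasDerivAt_tan (cos_arctan_pos z).ne'
  rwa [cos_sq_arctan, one_div_one_div] at h

section FrenetFrame

variable {I : Set ℝ} {α T N B : ℝ → E3} {κ τ : ℝ → ℝ}

lemma inner_tangent_normal_eq_zero (hIo : IsOpen I)
    (hT : ∀ s ∈ I, HasDerivAt T (κ s • N s) s) (hTu : ∀ s ∈ I, ‖T s‖ = 1)
    (hκ : ∀ s ∈ I, 0 < κ s) {s : ℝ} (hs : s ∈ I) : ⟪T s, N s⟫ = 0 := by
  have h := inner_deriv_eq_zero_of_eventually_norm_eq (hT s hs)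
    (eventually_of_mem (hIo.mem_nhds hs) hTu)
  rw [real_inner_smul_right] at h
  exact (mul_eq_zero.mp h).resolve_left (hκ s hs).ne'

lemma exists_inner_tangent_eq_add_const (hIo : IsOpen I) (hIc : Convex ℝ I)
    (hα : ∀ s ∈ I, HasDerivAt α (T s) s) (hT : ∀ s ∈ I, HasDerivAt T (κ s • N s) s)
    (hTu : ∀ s ∈ I, ‖T s‖ = 1) (hrect : ∀ s ∈ I, ⟪α s, N s⟫ = 0) :
    ∃ c, ∀ s ∈ I, ⟪α s, T s⟫ = s + c := by
  have hd : ∀ s ∈ I, HasDerivAt (fun x => ⟪α x, T x⟫) 1 s := fun s hs => by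
    refine ((hα s hs).inner ℝ (hT s hs)).congr_deriv ?_
    rw [real_inner_smul_right, hrect s hs, real_inner_self_eq_norm_sq, hTu s hs]; norm_num
  obtain ⟨c, hc⟩ := hIo.exists_eq_add_of_deriv_eq hIc.isPreconnected
    (fun s hs => (hd s hs).differentiableAt.differentiableWithinAt)
    differentiableOn_id (fun s hs => by simp [(hd s hs).deriv])
  exact ⟨c, fun s hs => hc hs⟩

lemma exists_inner_binormal_eq_const (hIo : IsOpen I) (hIc : Convex ℝ I)
    (hα : ∀ s ∈ I, HasDerivAt α (T s) s) (hB : ∀ s ∈ I, HasDerivAt B ((-τ s) • N s) s)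
    (hBdef : ∀ s ∈ I, B s = cross3 (T s) (N s)) (hrect : ∀ s ∈ I, ⟪α s, N s⟫ = 0) :
    ∃ μ, ∀ s ∈ I, ⟪α s, B s⟫ = μ := by
  have hd : ∀ s ∈ I, HasDerivAt (fun x => ⟪α x, B x⟫) 0 s := fun s hs => by
    refine ((hα s hs).inner ℝ (hB s hs)).congr_deriv ?_
    rw [real_inner_smul_right, hrect s hs, hBdef s hs, inner_cross3_self_left]; norm_num
  exact hIo.exists_is_const_of_deriv_eq_zero hIc.isPreconnected
    (fun s hs => (hd s hs).differentiableAt.differentiableWithinAt)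
    (fun s hs => (hd s hs).deriv)

lemma curvature_mul_inner_tangent_eq_torsion_mul_inner_binormal (hIo : IsOpen I)
    (hα : ∀ s ∈ I, HasDerivAt α (T s) s)
    (hN : ∀ s ∈ I, HasDerivAt N ((-κ s) • T s + τ s • B s) s)
    (hTN : ∀ s ∈ I, ⟪T s, N s⟫ = 0) (hrect : ∀ s ∈ I, ⟪α s, N s⟫ = 0) {s : ℝ} (hs : s ∈ I) :
    κ s * ⟪α s, T s⟫ = τ s * ⟪α s, B s⟫ := by
  have h := inner_add_inner_eq_zero_of_eventually_eq (hα s hs) (hN s hs)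
    (eventually_of_mem (hIo.mem_nhds hs) hrect)
  rw [inner_add_right, real_inner_smul_right, real_inner_smul_right, hTN s hs] at h
  linarith

lemma exists_eq_smul_tangent_add_smul_binormal (hIo : IsOpen I) (hIc : Convex ℝ I)
    (hα : ∀ s ∈ I, HasDerivAt α (T s) s) (hT : ∀ s ∈ I, HasDerivAt T (κ s • N s) s)
    (hN : ∀ s ∈ I, HasDerivAt N ((-κ s) • T s + τ s • B s) s)
    (hB : ∀ s ∈ I, HasDerivAt B ((-τ s) • N s) s)
    (hTu : ∀ s ∈ I, ‖T s‖ = 1) (hNu : ∀ s ∈ I, ‖N s‖ = 1)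
    (hBdef : ∀ s ∈ I, B s = cross3 (T s) (N s)) (hκ : ∀ s ∈ I, 0 < κ s)
    (hrect : ∀ s ∈ I, ⟪α s, N s⟫ = 0) :
    ∃ c μ : ℝ, ∀ s ∈ I, μ ≠ 0 ∧ α s = (s + c) • T s + μ • B s := by
  have hTN : ∀ s ∈ I, ⟪T s, N s⟫ = 0 := fun s hs => inner_tangent_normal_eq_zero hIo hT hTu hκ hs
  obtain ⟨c, hc⟩ := exists_inner_tangent_eq_add_const hIo hIc hα hT hTu hrect
  obtain ⟨μ, hμ⟩ := exists_inner_binormal_eq_const hIo hIc hα hB hBdef hrect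
  refine ⟨c, μ, fun s hs => ⟨?_, ?_⟩⟩
  · rintro rfl
    -- then `κ (s + c) = 0`, so `s + c` vanishes on the open set `I`, contradicting its slope `1`
    have h0 : ∀ᶠ x in 𝓝 s, x + c = 0 := eventually_of_mem (hIo.mem_nhds hs) fun x hx => by
      have h := curvature_mul_inner_tangent_eq_torsion_mul_inner_binormal hIo hα hN hTN hrect hx
      rw [hc x hx, hμ x hx, mul_zero] at h
      exact (mul_eq_zero.mp h).resolve_left (hκ x hx).ne'
    have h1 := ((hasDerivAt_id s).add_const c).unique
      ((hasDerivAt_const s 0).congr_of_eventuallyEq h0)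
    norm_num at h1
  · have h := eq_sum_inner_smul_cross3 (hTu s hs) (hNu s hs) (hTN s hs) (α s)
    rwa [← hBdef s hs, real_inner_comm, hc s hs, real_inner_comm, hrect s hs, zero_smul, add_zero,
      real_inner_comm, hμ s hs] at h

end FrenetFrame

/-- When `α s = (s + c) T + μ B`, the curve `α / ‖α‖` has speed `|μ| / ((s + c) ^ 2 + μ ^ 2)`,
a primitive of which is `arctan ((s + c) / |μ|)`: this is `α / ‖α‖` reparametrized by arc length. -/
def coneDirectrix (α : ℝ → E3) (c μ θ : ℝ) : E3 :=
  ‖α (|μ| * tan θ - c)‖⁻¹ • α (|μ| * tan θ - c)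

section ConeDirectrix

variable {α : ℝ → E3} {c μ s : ℝ}

lemma coneDirectrix_arctan (hμ : μ ≠ 0) :
    coneDirectrix α c μ (arctan ((s + c) / |μ|)) = ‖α s‖⁻¹ • α s := by
  have h : |μ| * tan (arctan ((s + c) / |μ|)) - c = s := by
    rw [tan_arctan]; field_simp; ring
  simp only [coneDirectrix, h]

lemma hasDerivAt_coneDirectrix {T B : E3} (hμ : μ ≠ 0) (hα : HasDerivAt α T s)
    (hdec : α s = (s + c) • T + μ • B) (hT : ‖T‖ = 1) (hB : ‖B‖ = 1) (hTB : ⟪T, B⟫ = 0) :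
    HasDerivAt (coneDirectrix α c μ) ((μ / (|μ| * ‖α s‖)) • (μ • T - (s + c) • B))
      (arctan ((s + c) / |μ|)) := by
  have hr : ‖α s‖ ^ 2 = (s + c) ^ 2 + μ ^ 2 := by rw [hdec, norm_smul_add_smul_sq hT hB hTB]
  have hα0 : α s ≠ 0 := hdec ▸ smul_add_smul_ne_zero hT hB hTB hμ
  have hαT : ⟪α s, T⟫ = s + c := by
    rw [hdec, inner_add_left, real_inner_smul_left, real_inner_smul_left,
      real_inner_self_eq_norm_sq, hT, real_inner_comm, hTB]; ring
  have hθ : HasDerivAt (fun θ => |μ| * tan θ - c) (‖α s‖ ^ 2 / |μ|) (arctan ((s + c) / |μ|)) := by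
    refine ((hasDerivAt_tan_arctan _).const_mul |μ|).sub_const c |>.congr_deriv ?_
    rw [hr]; field_simp; rw [sq_abs]; ring
  have hF := hα.norm_inv_smul hα0
  refine (hF.scomp_of_eq (arctan ((s + c) / |μ|)) hθ ?_).congr_deriv ?_
  · rw [tan_arctan]; field_simp; ring
  · have habs : |μ| ≠ 0 := abs_ne_zero.mpr hμ
    have hr0 : ‖α s‖ ≠ 0 := norm_ne_zero_iff.mpr hα0
    set r := ‖α s‖
    rw [hαT, hdec]
    match_scalars
    · field_simp; linear_combination hr
    · field_simp

end ConeDirectrix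

section ConeFrame

variable {T B : E3} {a μ : ℝ}

lemma norm_coneDirectrix_deriv (hμ : μ ≠ 0) (hT : ‖T‖ = 1) (hB : ‖B‖ = 1) (hTB : ⟪T, B⟫ = 0) :
    ‖(μ / (|μ| * ‖a • T + μ • B‖)) • (μ • T - a • B)‖ = 1 := by
  have hr := norm_smul_add_smul_sq hT hB hTB a μ
  have hr0 : ‖a • T + μ • B‖ ≠ 0 := norm_ne_zero_iff.mpr (smul_add_smul_ne_zero hT hB hTB hμ)
  have hD : ‖μ • T - a • B‖ = ‖a • T + μ • B‖ := by
    rw [sub_eq_add_neg, ← neg_smul, ← sq_eq_sq₀ (norm_nonneg _) (norm_nonneg _),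
      norm_smul_add_smul_sq hT hB hTB, hr]; ring
  simp only [norm_smul, hD, norm_div, norm_mul, Real.norm_eq_abs, abs_abs, abs_norm]
  field_simp

lemma normal_eq_cross3_or_eq_neg_cross3 {N : E3} (hμ : μ ≠ 0) (hT : ‖T‖ = 1) (hB : ‖B‖ = 1)
    (hTB : ⟪T, B⟫ = 0) (hN : cross3 T B = -N) :
    let r := ‖a • T + μ • B‖
    N = cross3 ((μ / (|μ| * r)) • (μ • T - a • B)) (r⁻¹ • (a • T + μ • B)) ∨
      N = -cross3 ((μ / (|μ| * r)) • (μ • T - a • B)) (r⁻¹ • (a • T + μ • B)) := by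
  intro r
  have hr : r ^ 2 = a ^ 2 + μ ^ 2 := norm_smul_add_smul_sq hT hB hTB a μ
  have hr0 : r ≠ 0 := norm_ne_zero_iff.mpr (smul_add_smul_ne_zero hT hB hTB hμ)
  have hcross : cross3 ((μ / (|μ| * r)) • (μ • T - a • B)) (r⁻¹ • (a • T + μ • B))
      = (μ / |μ|) • -N := by
    rw [← hN, show (μ / (|μ| * r)) • (μ • T - a • B)
        = (μ / (|μ| * r) * μ) • T + (-(μ / (|μ| * r) * a)) • B by module,
      smul_add, smul_smul, smul_smul, cross3_smul_add_smul]
    congr 1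
    field_simp
    linear_combination -hr
  rw [hcross]
  rcases hμ.lt_or_gt with hneg | hpos
  · left; rw [abs_of_neg hneg, div_neg, div_self hμ]; simp
  · right; rw [abs_of_pos hpos, div_self hμ]; simp

end ConeFrame

theorem geodesic_on_cone_iff_rectifying_general (I : Set ℝ) (hIo : IsOpen I) (hIc : Convex ℝ I)
    (α T N B : ℝ → E3) (κ τ : ℝ → ℝ)
    (hα : ∀ s ∈ I, HasDerivAt α (T s) s)
    (hT : ∀ s ∈ I, HasDerivAt T (κ s • N s) s)
    (hN : ∀ s ∈ I, HasDerivAt N ((-κ s) • T s + τ s • B s) s)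
    (hB : ∀ s ∈ I, HasDerivAt B ((-τ s) • N s) s)
    (hTu : ∀ s ∈ I, ‖T s‖ = 1)
    (hNu : ∀ s ∈ I, ‖N s‖ = 1)
    (hBdef : ∀ s ∈ I, B s = cross3 (T s) (N s))
    (hκ : ∀ s ∈ I, 0 < κ s) :
    (∃ (y : ℝ → E3) (u t : ℝ → ℝ), ∀ s ∈ I,
        ‖y (t s)‖ = 1 ∧
        HasDerivAt y (deriv y (t s)) (t s) ∧
        ‖deriv y (t s)‖ = 1 ∧
        0 < u s ∧
        α s = u s • y (t s) ∧
        (N s = cross3 (deriv y (t s)) (y (t s)) ∨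
         N s = -cross3 (deriv y (t s)) (y (t s)))) ↔ (∀ s ∈ I, ⟪α s, N s⟫ = 0) := by
  constructor
  · rintro ⟨y, u, t, hcone⟩ s hs
    obtain ⟨-, -, -, -, hαs, hNs⟩ := hcone s hs
    rw [hαs, real_inner_smul_left]
    rcases hNs with hNs | hNs <;> simp [hNs, inner_cross3_self_right]
  · intro hrect
    obtain ⟨c, μ, hdec⟩ :=
      exists_eq_smul_tangent_add_smul_binormal hIo hIc hα hT hN hB hTu hNu hBdef hκ hrect
    refine ⟨coneDirectrix α c μ, fun s => ‖α s‖, fun s => arctan ((s + c) / |μ|), fun s hs => ?_⟩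
    obtain ⟨hμ, hαs⟩ := hdec s hs
    have hTN := inner_tangent_normal_eq_zero hIo hT hTu hκ hs
    have hBu : ‖B s‖ = 1 := hBdef s hs ▸ norm_cross3_eq_one (hTu s hs) (hNu s hs) hTN
    have hTB : ⟪T s, B s⟫ = 0 := hBdef s hs ▸ inner_cross3_self_left _ _
    have hTBN : cross3 (T s) (B s) = -N s := by
      rw [hBdef s hs, cross3_cross3_self_left, hTN, real_inner_self_eq_norm_sq, hTu s hs]; simp
    have hα0 : α s ≠ 0 := hαs ▸ smul_add_smul_ne_zero (hTu s hs) hBu hTB hμ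
    have hD := hasDerivAt_coneDirectrix hμ (hα s hs) hαs (hTu s hs) hBu hTB
    rw [hD.deriv, coneDirectrix_arctan hμ]
    refine ⟨norm_smul_inv_norm hα0, hD, ?_, norm_pos_iff.mpr hα0,
      (smul_inv_smul₀ (norm_ne_zero_iff.mpr hα0) _).symm, ?_⟩
    · rw [hαs]; exact norm_coneDirectrix_deriv hμ (hTu s hs) hBu hTB
    · rw [hαs]; exact normal_eq_cross3_or_eq_neg_cross3 hμ (hTu s hs) hBu hTB hTBN

/-- A unit-speed curve with positive curvature is a geodesic on some general cone
with vertex at the origin (its principal normal is parallel to the surface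
normal along it) iff it is a rectifying curve. -/
theorem geodesic_on_cone_iff_rectifying (I : Set ℝ) (hIo : IsOpen I) (hIc : Convex ℝ I)
    (α T N B : ℝ → E3) (κ τ : ℝ → ℝ)
    (hα : ∀ s ∈ I, HasDerivAt α (T s) s)
    (hT : ∀ s ∈ I, HasDerivAt T (κ s • N s) s)
    (hN : ∀ s ∈ I, HasDerivAt N ((-κ s) • T s + τ s • B s) s)
    (hB : ∀ s ∈ I, HasDerivAt B ((-τ s) • N s) s)
    (hTu : ∀ s ∈ I, ‖T s‖ = 1)
    (hNu : ∀ s ∈ I, ‖N s‖ = 1)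
    (hBdef : ∀ s ∈ I, B s = cross3 (T s) (N s))
    (hκ : ∀ s ∈ I, 0 < κ s)
    (hne : I.Nonempty) :
    (∃ (y : ℝ → E3) (u t : ℝ → ℝ), ∀ s ∈ I,
        ‖y (t s)‖ = 1 ∧
        HasDerivAt y (deriv y (t s)) (t s) ∧
        ‖deriv y (t s)‖ = 1 ∧
        0 < u s ∧
        α s = u s • y (t s) ∧
        (N s = cross3 (deriv y (t s)) (y (t s)) ∨
         N s = -cross3 (deriv y (t s)) (y (t s)))) ↔ (∀ s ∈ I, ⟪α s, N s⟫ = 0) :=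
  geodesic_on_cone_iff_rectifying_general I hIo hIc α T N B κ τ hα hT hN hB hTu hNu hBdef hκ
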